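/- Let Ω ⊂ ℝ be an open interval, and suppose u, v ∈ L²(Ω) with u ≥ v a.e. in Ω. Let J_λ u, J_λ v ∈ H²(Ω) ∩ H¹₀(Ω) satisfy J_λ u + λ(-Δ(J_λ u) + (J_λ u)³) = u and J_λ v + λ(-Δ(J_λ v) + (J_λ v)³) = v in L²(Ω), for λ > 0. Then J_λ u ≥ J_λ v a.e. in Ω. -/

import Mathlib

/-!
Write `W = J_λ v - J_λ u`. Subtracting the resolvent equations gives
`λ W'' = W + λ ((J_λ v)³ - (J_λ u)³) + (u - v)`, and every term on the right is nonnegative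
wherever `W > 0`, since `x ↦ x³` is increasing. As `W''` is integrable, `W'` is its primitive, so
`W'` is nondecreasing and `W` convex on each interval where `W` is positive; such an interval ends at points where `W ≤ 0` (possibly `a` or `b`, where `W = 0`),
and a convex function is bounded by its values at the ends, so no such interval exists.
-/

open MeasureTheory Set

lemma exists_le_forall_Ioc_notMem_of_isClosed {S : Set ℝ} (hS : IsClosed S) {a x : ℝ}
    (ha : a ∈ S) (hax : a ≤ x) : ∃ c ∈ S, c ≤ x ∧ ∀ y ∈ Ioc c x, y ∉ S := by
  have hmem : sSup (S ∩ Icc a x) ∈ S ∩ Icc a x :=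
    (hS.inter isClosed_Icc).csSup_mem ⟨a, ha, le_rfl, hax⟩
      (bddAbove_Icc.mono inter_subset_right)
  refine ⟨_, hmem.1, hmem.2.2, fun y hy hyS => hy.1.not_ge ?_⟩
  exact le_csSup (bddAbove_Icc.mono inter_subset_right) ⟨hyS, hmem.2.1.trans hy.1.le, hy.2⟩

lemma exists_ge_forall_Ico_notMem_of_isClosed {S : Set ℝ} (hS : IsClosed S) {b x : ℝ}
    (hb : b ∈ S) (hxb : x ≤ b) : ∃ d ∈ S, x ≤ d ∧ ∀ y ∈ Ico x d, y ∉ S := by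
  have hmem : sInf (S ∩ Icc x b) ∈ S ∩ Icc x b :=
    (hS.inter isClosed_Icc).csInf_mem ⟨b, hb, hxb, le_rfl⟩
      (bddBelow_Icc.mono inter_subset_right)
  refine ⟨_, hmem.1, hmem.2.1, fun y hy hyS => hy.2.not_ge ?_⟩
  exact csInf_le (bddBelow_Icc.mono inter_subset_right) ⟨hyS, hy.1, hy.2.le.trans hmem.2.2⟩

lemma ContinuousOn.exists_Ioo_pos {W : ℝ → ℝ} {a b x : ℝ} (hW : ContinuousOn W (Icc a b))
    (ha : W a ≤ 0) (hb : W b ≤ 0) (hx : x ∈ Icc a b) (hWx : 0 < W x) :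
    ∃ c d, a ≤ c ∧ c < x ∧ x < d ∧ d ≤ b ∧ W c ≤ 0 ∧ W d ≤ 0 ∧
      ∀ y ∈ Ioo c d, 0 < W y := by
  have hS : IsClosed (Icc a b ∩ W ⁻¹' Iic 0) :=
    hW.preimage_isClosed_of_isClosed isClosed_Icc isClosed_Iic
  have hxS : x ∉ Icc a b ∩ W ⁻¹' Iic 0 := fun h => h.2.not_gt hWx
  obtain ⟨c, ⟨hc, hWc⟩, hcx, hc_last⟩ :=
    exists_le_forall_Ioc_notMem_of_isClosed hS ⟨left_mem_Icc.2 (hx.1.trans hx.2), ha⟩ hx.1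
  obtain ⟨d, ⟨hd, hWd⟩, hxd, hd_first⟩ :=
    exists_ge_forall_Ico_notMem_of_isClosed hS ⟨right_mem_Icc.2 (hx.1.trans hx.2), hb⟩ hx.2
  refine ⟨c, d, hc.1, hcx.lt_of_ne ?_, hxd.lt_of_ne ?_, hd.2, hWc, hWd, fun y hy => ?_⟩
  · rintro rfl; exact hxS ⟨hc, hWc⟩
  · rintro rfl; exact hxS ⟨hd, hWd⟩
  have hy_ab : y ∈ Icc a b := ⟨hc.1.trans hy.1.le, hy.2.le.trans hd.2⟩
  rcases le_total y x with hyx | hxy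
  · exact not_le.1 fun h => hc_last y ⟨hy.1, hyx⟩ ⟨hy_ab, h⟩
  · exact not_le.1 fun h => hd_first y ⟨hxy, hy.2⟩ ⟨hy_ab, h⟩

lemma monotoneOn_of_hasDerivAt_of_ae_nonneg {f f' : ℝ → ℝ} {s : Set ℝ} (hs : s.OrdConnected)
    (hf : ∀ x ∈ s, HasDerivAt f (f' x) x) (hint : IntegrableOn f' s)
    (hnonneg : ∀ᵐ x ∂volume.restrict s, 0 ≤ f' x) : MonotoneOn f s := by
  intro x hx y hy hxy
  have hsub : uIcc x y ⊆ s := uIcc_of_le hxy ▸ hs.out hx hy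
  have hFTC : ∫ z in x..y, f' z = f y - f x :=
    intervalIntegral.integral_eq_sub_of_hasDerivAt (fun z hz => hf z (hsub hz))
      ((hint.mono_set hsub).intervalIntegrable)
  have hpos : 0 ≤ ∫ z in x..y, f' z :=
    intervalIntegral.integral_nonneg_of_ae_restrict hxy
      (ae_restrict_of_ae_restrict_of_subset (uIcc_of_le hxy ▸ hsub) hnonneg)
  linarith

lemma convexOn_Icc_of_hasDerivAt_of_monotoneOn {W W' : ℝ → ℝ} {c d : ℝ}
    (hW : ContinuousOn W (Icc c d)) (hW' : ∀ x ∈ Ioo c d, HasDerivAt W (W' x) x)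
    (hmono : MonotoneOn W' (Ioo c d)) : ConvexOn ℝ (Icc c d) W := by
  refine MonotoneOn.convexOn_of_deriv (convex_Icc c d) hW ?_ ?_ <;> rw [interior_Icc]
  · exact fun x hx => (hW' x hx).differentiableAt.differentiableWithinAt
  · exact hmono.congr fun x hx => ((hW' x hx).deriv).symm

theorem nonpos_of_secondDeriv_nonneg_where_pos {W W' W'' : ℝ → ℝ} {a b : ℝ}
    (hW : ContinuousOn W (Icc a b)) (ha : W a ≤ 0) (hb : W b ≤ 0)
    (hW' : ∀ x ∈ Ioo a b, HasDerivAt W (W' x) x)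
    (hW'' : ∀ x ∈ Ioo a b, HasDerivAt W' (W'' x) x)
    (hint : IntegrableOn W'' (Ioo a b))
    (hsub : ∀ᵐ x ∂volume.restrict (Ioo a b), 0 < W x → 0 ≤ W'' x) :
    ∀ x ∈ Ioo a b, W x ≤ 0 := by
  intro x hx
  by_contra! hWx
  obtain ⟨c, d, hac, hcx, hxd, hdb, hWc, hWd, hpos⟩ :=
    hW.exists_Ioo_pos ha hb (Ioo_subset_Icc_self hx) hWx
  have hcd : Ioo c d ⊆ Ioo a b := Ioo_subset_Ioo hac hdb
  have hnonneg : ∀ᵐ y ∂volume.restrict (Ioo c d), 0 ≤ W'' y := by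
    filter_upwards [ae_restrict_of_ae_restrict_of_subset hcd hsub,
      ae_restrict_mem measurableSet_Ioo] with y hy hyc using hy (hpos y hyc)
  have hconvex : ConvexOn ℝ (Icc c d) W :=
    convexOn_Icc_of_hasDerivAt_of_monotoneOn (hW.mono (Icc_subset_Icc hac hdb))
      (fun y hy => hW' y (hcd hy))
      (monotoneOn_of_hasDerivAt_of_ae_nonneg ordConnected_Ioo (fun y hy => hW'' y (hcd hy))
        (hint.mono_set hcd) hnonneg)
  have hle : W x ≤ max (W c) (W d) :=
    hconvex.le_on_segment (left_mem_Icc.2 (hcx.trans hxd).le) (right_mem_Icc.2 (hcx.trans hxd).le)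
      (segment_eq_Icc (hcx.trans hxd).le ▸ ⟨hcx.le, hxd.le⟩)
  exact hWx.not_ge (hle.trans (max_le hWc hWd))

lemma secondDeriv_le_of_resolvent_eq {lam U U'' V V'' u v : ℝ} (hlam : 0 < lam)
    (hU : U + lam * (-U'' + U ^ 3) = u) (hV : V + lam * (-V'' + V ^ 3) = v)
    (huv : v ≤ u) (hUV : U < V) : U'' ≤ V'' := by
  have hcube : U ^ 3 ≤ V ^ 3 := (Odd.pow_le_pow (by decide)).2 hUV.le
  have : 0 ≤ lam * (V'' - U'') := by nlinarith
  exact sub_nonneg.1 (nonneg_of_mul_nonneg_right this hlam)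

theorem stmt_17_general (a b : ℝ) (lam : ℝ) (hlam : 0 < lam)
    (u v : ℝ → ℝ)
    (huv : ∀ᵐ x ∂(volume.restrict (Set.Ioo a b)), v x ≤ u x)
    (U U' U'' V V' V'' : ℝ → ℝ)
    -- `U = J_lam u` and `V = J_lam v` belong to `H²(a,b) ∩ H¹₀(a,b)`
    (hUc : ContinuousOn U (Set.Icc a b)) (hVc : ContinuousOn V (Set.Icc a b))
    (hUa : U a = 0) (hUb : U b = 0) (hVa : V a = 0) (hVb : V b = 0)
    (hUd : ∀ x ∈ Set.Ioo a b, HasDerivAt U (U' x) x ∧ HasDerivAt U' (U'' x) x)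
    (hVd : ∀ x ∈ Set.Ioo a b, HasDerivAt V (V' x) x ∧ HasDerivAt V' (V'' x) x)
    (hU''2 : MemLp U'' 2 (volume.restrict (Set.Ioo a b)))
    (hV''2 : MemLp V'' 2 (volume.restrict (Set.Ioo a b)))
    -- the resolvent equations
    (heqU : ∀ x ∈ Set.Ioo a b, U x + lam * (-(U'' x) + (U x) ^ 3) = u x)
    (heqV : ∀ x ∈ Set.Ioo a b, V x + lam * (-(V'' x) + (V x) ^ 3) = v x) :
    ∀ᵐ x ∂(volume.restrict (Set.Ioo a b)), V x ≤ U x := by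
  have hnonpos : ∀ x ∈ Ioo a b, V x - U x ≤ 0 := by
    refine nonpos_of_secondDeriv_nonneg_where_pos (W' := V' - U') (W'' := V'' - U'')
      (hVc.sub hUc) (by simp [hUa, hVa]) (by simp [hUb, hVb])
      (fun x hx => (hVd x hx).1.sub (hUd x hx).1) (fun x hx => (hVd x hx).2.sub (hUd x hx).2)
      ((hV''2.sub hU''2).integrable one_le_two) ?_
    filter_upwards [huv, ae_restrict_mem measurableSet_Ioo] with x hvu hx hpos
    exact sub_nonneg.2 (secondDeriv_le_of_resolvent_eq hlam (heqU x hx) (heqV x hx) hvu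
      (sub_pos.1 hpos))
  filter_upwards [ae_restrict_mem measurableSet_Ioo] with x hx
  exact sub_nonpos.1 (hnonpos x hx)

/-- Order-preserving property of the resolvent `J_λ = (I + λ(-Δ + (·)³))⁻¹` with
homogeneous Dirichlet conditions on the interval `Ω = (a,b)`. -/
theorem stmt_17 (a b : ℝ) (hab : a < b) (lam : ℝ) (hlam : 0 < lam)
    (u v : ℝ → ℝ)
    (huv : ∀ᵐ x ∂(volume.restrict (Set.Ioo a b)), v x ≤ u x)
    (U U' U'' V V' V'' : ℝ → ℝ)
    -- `U = J_lam u` and `V = J_lam v` belong to `H²(a,b) ∩ H¹₀(a,b)`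
    (hUc : ContinuousOn U (Set.Icc a b)) (hVc : ContinuousOn V (Set.Icc a b))
    (hUa : U a = 0) (hUb : U b = 0) (hVa : V a = 0) (hVb : V b = 0)
    (hUd : ∀ x ∈ Set.Ioo a b, HasDerivAt U (U' x) x ∧ HasDerivAt U' (U'' x) x)
    (hVd : ∀ x ∈ Set.Ioo a b, HasDerivAt V (V' x) x ∧ HasDerivAt V' (V'' x) x)
    (hU2 : MemLp U 2 (volume.restrict (Set.Ioo a b)))
    (hV2 : MemLp V 2 (volume.restrict (Set.Ioo a b)))
    (hU''2 : MemLp U'' 2 (volume.restrict (Set.Ioo a b)))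
    (hV''2 : MemLp V'' 2 (volume.restrict (Set.Ioo a b)))
    -- the resolvent equations
    (heqU : ∀ x ∈ Set.Ioo a b, U x + lam * (-(U'' x) + (U x) ^ 3) = u x)
    (heqV : ∀ x ∈ Set.Ioo a b, V x + lam * (-(V'' x) + (V x) ^ 3) = v x) :
    ∀ᵐ x ∂(volume.restrict (Set.Ioo a b)), V x ≤ U x :=
  stmt_17_general a b lam hlam u v huv U U' U'' V V' V'' hUc hVc hUa hUb hVa hVb hUd hVd hU''2 hV''2
    heqU heqV
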